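/- For each z ≥ 0, the solution f_z of the half-normal Stein equation for h_z = 1_{(-∞,z]} satisfies sup_{x≥0, x≠z} |f_z'(x)| ≤ 1, and the function x ↦ x·f_z(x) is increasing on [0,∞). -/

import Mathlib

/-!
With `F = 2Φ - 1` and `p = 2φ`, the function `f_z` equals `(1 - F z) · F/p` on `[0, z]` and
`F z · (1 - F)/p` on `[z, ∞)`; since `p' = -x p`, both quotients `r` satisfy `r' = ±1 + x r`.
Everything then reduces to Mills' inequalities for `x ≥ 0`:
`x (1 - Φ x) ≤ φ x` (compare `1 - Φ x = ∫_x^∞ φ` with `∫_x^∞ t φ t dt = φ x`) and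
`x φ x ≤ (1 + x²)(1 - Φ x)` (the difference is increasing by the first one and tends to `0`).
The first bounds `x (1 - F x)/p x` by `1`, which controls `f_z'` on both pieces; the second makes
`x (1 - F x)/p x` increasing, and `x F x/p x` is increasing for free.
-/

open MeasureTheory Real

/-- Standard normal density. -/
noncomputable def stdPhi (x : ℝ) : ℝ := Real.exp (-x^2/2) / Real.sqrt (2*Real.pi)

/-- Standard normal distribution function. -/
noncomputable def stdCDF (x : ℝ) : ℝ := ∫ t in Set.Iic x, stdPhi t

/-- The solution of the half-normal Stein equation for `h_z = 1_{(-∞,z]}`: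
`f_z(x) = (F(x ∧ z) - F(x)F(z)) / p(x)` with `F = 2Φ - 1` and `p = 2φ`. -/
noncomputable def fz (z x : ℝ) : ℝ :=
  ((2*stdCDF (min x z) - 1) - (2*stdCDF x - 1) * (2*stdCDF z - 1)) / (2*stdPhi x)

open Set Filter Topology

lemma stdPhi_pos (x : ℝ) : 0 < stdPhi x := by
  unfold stdPhi; positivity

lemma stdPhi_neg (x : ℝ) : stdPhi (-x) = stdPhi x := by
  simp [stdPhi]

lemma continuous_stdPhi : Continuous stdPhi := by
  unfold stdPhi; fun_prop

lemma stdPhi_eq_gaussian : stdPhi = fun x => rexp (-(1 / 2) * x ^ 2) / √(2 * π) := by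
  ext x; unfold stdPhi; ring_nf

lemma integrable_stdPhi : Integrable stdPhi := by
  rw [stdPhi_eq_gaussian]
  exact (integrable_exp_neg_mul_sq (by norm_num)).div_const _

lemma integral_stdPhi : ∫ x, stdPhi x = 1 := by
  rw [stdPhi_eq_gaussian, integral_div, integral_gaussian, div_eq_one_iff_eq (by positivity)]
  ring_nf

lemma hasDerivAt_stdPhi (x : ℝ) : HasDerivAt stdPhi (-x * stdPhi x) x := by
  have h : HasDerivAt (fun y : ℝ => -y ^ 2 / 2) (-x) x :=
    ((hasDerivAt_pow 2 x).neg.div_const 2).congr_deriv (by ring)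
  exact (h.exp.div_const (√(2 * π))).congr_deriv (by rw [stdPhi]; ring)

lemma tendsto_pow_mul_stdPhi_atTop (n : ℕ) :
    Tendsto (fun x => x ^ n * stdPhi x) atTop (𝓝 0) := by
  have h := ((tendsto_rpow_abs_mul_exp_neg_mul_sq_cocompact (a := 1 / 2) (by norm_num) n).mono_left
    atTop_le_cocompact).div_const (√(2 * π))
  rw [zero_div] at h
  refine h.congr' ((eventually_ge_atTop 0).mono fun x hx => ?_)
  rw [stdPhi_eq_gaussian, abs_of_nonneg hx, rpow_natCast, mul_div_assoc]

lemma stdCDF_sub_stdCDF (a b : ℝ) : stdCDF b - stdCDF a = ∫ t in a..b, stdPhi t :=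
  intervalIntegral.integral_Iic_sub_Iic integrable_stdPhi.integrableOn
    integrable_stdPhi.integrableOn

lemma hasDerivAt_stdCDF (x : ℝ) : HasDerivAt stdCDF (stdPhi x) x := by
  have h := (intervalIntegral.integral_hasDerivAt_right (a := 0) (b := x)
    (continuous_stdPhi.intervalIntegrable _ _) (continuous_stdPhi.stronglyMeasurableAtFilter _ _)
    continuous_stdPhi.continuousAt).const_add (stdCDF 0)
  refine h.congr_of_eventuallyEq (Eventually.of_forall fun y => ?_)
  simp only [← stdCDF_sub_stdCDF, add_sub_cancel]

lemma monotone_stdCDF : Monotone stdCDF :=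
  monotone_of_hasDerivAt_nonneg hasDerivAt_stdCDF fun x => (stdPhi_pos x).le

lemma one_sub_stdCDF (x : ℝ) : 1 - stdCDF x = ∫ t in Ioi x, stdPhi t := by
  rw [← integral_stdPhi, ← intervalIntegral.integral_Iic_add_Ioi (b := x)
    integrable_stdPhi.integrableOn integrable_stdPhi.integrableOn, stdCDF, add_sub_cancel_left]

lemma stdCDF_le_one (x : ℝ) : stdCDF x ≤ 1 := by
  have := setIntegral_nonneg (μ := volume) (measurableSet_Ioi (a := x))
    fun t _ => (stdPhi_pos t).le
  linarith [one_sub_stdCDF x]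

lemma stdCDF_zero : stdCDF 0 = 1 / 2 := by
  have h : stdCDF 0 = ∫ t in Ioi (0 : ℝ), stdPhi t := by
    rw [stdCDF, ← neg_zero, ← integral_comp_neg_Iic]
    simp_rw [stdPhi_neg, neg_zero]
  linarith [one_sub_stdCDF 0]

lemma mul_one_sub_stdCDF_le_stdPhi {x : ℝ} (hx : 0 ≤ x) : x * (1 - stdCDF x) ≤ stdPhi x := by
  have hderiv : ∀ t ∈ Ici x, HasDerivAt (fun s => -stdPhi s) (t * stdPhi t) t := fun t _ =>
    (hasDerivAt_stdPhi t).neg.congr_deriv (by ring)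
  have hnonneg : ∀ t ∈ Ioi x, 0 ≤ t * stdPhi t := fun t ht =>
    mul_nonneg (hx.trans ht.le) (stdPhi_pos t).le
  have hlim : Tendsto (fun s => -stdPhi s) atTop (𝓝 0) := by
    simpa using (tendsto_pow_mul_stdPhi_atTop 0).neg
  have hint := integrableOn_Ioi_deriv_of_nonneg' hderiv hnonneg hlim
  have hval : ∫ t in Ioi x, t * stdPhi t = stdPhi x := by
    simpa using integral_Ioi_of_hasDerivAt_of_nonneg' hderiv hnonneg hlim
  rw [one_sub_stdCDF, ← integral_const_mul, ← hval]
  exact setIntegral_mono_on (integrable_stdPhi.const_mul x).integrableOn hint measurableSet_Ioi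
    fun t ht => mul_le_mul_of_nonneg_right ht.le (stdPhi_pos t).le

lemma monotoneOn_Ici_of_hasDerivAt {f f' : ℝ → ℝ} {a : ℝ} (hf : ∀ x, HasDerivAt f (f' x) x)
    (hf' : ∀ x, a < x → 0 ≤ f' x) : MonotoneOn f (Ici a) :=
  monotoneOn_of_hasDerivWithinAt_nonneg (convex_Ici a)
    (fun x _ => (hf x).continuousAt.continuousWithinAt) (fun x _ => (hf x).hasDerivWithinAt)
    fun x hx => hf' x (by rwa [interior_Ici] at hx)

lemma mul_stdPhi_le_one_add_sq_mul_one_sub_stdCDF {x : ℝ} (hx : 0 ≤ x) :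
    x * stdPhi x ≤ (1 + x ^ 2) * (1 - stdCDF x) := by
  set g : ℝ → ℝ := fun t => t * stdPhi t - (1 + t ^ 2) * (1 - stdCDF t) with hg
  have hderiv (t : ℝ) : HasDerivAt g (2 * (stdPhi t - t * (1 - stdCDF t))) t := by
    have := ((hasDerivAt_id t).mul (hasDerivAt_stdPhi t)).sub
      (((hasDerivAt_pow 2 t).const_add 1).mul ((hasDerivAt_stdCDF t).const_sub 1))
    exact this.congr_deriv (by simp only [id, Nat.cast_ofNat]; ring)
  have hmono : MonotoneOn g (Ici 0) :=
    monotoneOn_Ici_of_hasDerivAt hderiv fun t ht => by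
      linarith [mul_one_sub_stdCDF_le_stdPhi ht.le]
  have htail : Tendsto (fun t => (1 + t ^ 2) * (1 - stdCDF t)) atTop (𝓝 0) := by
    refine squeeze_zero' (Eventually.of_forall fun t =>
        mul_nonneg (by positivity) (sub_nonneg.2 (stdCDF_le_one t)))
      ((eventually_ge_atTop 1).mono fun t ht => ?_)
      (by simpa using (tendsto_pow_mul_stdPhi_atTop 1).const_mul 2)
    have := mul_one_sub_stdCDF_le_stdPhi (zero_le_one.trans ht)
    nlinarith [mul_le_mul_of_nonneg_left this (zero_le_one.trans ht),
      mul_nonneg (by nlinarith : 0 ≤ t ^ 2 - 1) (sub_nonneg.2 (stdCDF_le_one t))]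
  have hlim : Tendsto g atTop (𝓝 0) := by
    simpa using (tendsto_pow_mul_stdPhi_atTop 1).sub htail
  have := ge_of_tendsto hlim ((eventually_ge_atTop x).mono fun t ht =>
    hmono hx (hx.trans ht) ht)
  simp only [hg] at this
  linarith

noncomputable def halfNormalCDF (x : ℝ) : ℝ := 2 * stdCDF x - 1

noncomputable def halfNormalPDF (x : ℝ) : ℝ := 2 * stdPhi x

lemma halfNormalPDF_pos (x : ℝ) : 0 < halfNormalPDF x :=
  mul_pos two_pos (stdPhi_pos x)

lemma hasDerivAt_halfNormalCDF (x : ℝ) : HasDerivAt halfNormalCDF (halfNormalPDF x) x :=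
  ((hasDerivAt_stdCDF x).const_mul 2).sub_const 1

lemma hasDerivAt_halfNormalPDF (x : ℝ) :
    HasDerivAt halfNormalPDF (-x * halfNormalPDF x) x :=
  ((hasDerivAt_stdPhi x).const_mul 2).congr_deriv (by rw [halfNormalPDF]; ring)

lemma halfNormalCDF_nonneg {x : ℝ} (hx : 0 ≤ x) : 0 ≤ halfNormalCDF x := by
  rw [halfNormalCDF]; linarith [monotone_stdCDF hx, stdCDF_zero]

lemma halfNormalCDF_le_one (x : ℝ) : halfNormalCDF x ≤ 1 := by
  rw [halfNormalCDF]; linarith [stdCDF_le_one x]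

noncomputable def cdfRatio (x : ℝ) : ℝ := halfNormalCDF x / halfNormalPDF x

noncomputable def millsRatio (x : ℝ) : ℝ := (1 - halfNormalCDF x) / halfNormalPDF x

lemma hasDerivAt_div_halfNormalPDF {q : ℝ → ℝ} {c x : ℝ}
    (hq : HasDerivAt q (c * halfNormalPDF x) x) :
    HasDerivAt (fun y => q y / halfNormalPDF y) (c + x * (q x / halfNormalPDF x)) x := by
  have hp := (halfNormalPDF_pos x).ne'
  refine (hq.div (hasDerivAt_halfNormalPDF x) hp).congr_deriv ?_
  field_simp
  ring

lemma hasDerivAt_cdfRatio (x : ℝ) : HasDerivAt cdfRatio (1 + x * cdfRatio x) x :=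
  hasDerivAt_div_halfNormalPDF ((hasDerivAt_halfNormalCDF x).congr_deriv (one_mul _).symm)

lemma hasDerivAt_millsRatio (x : ℝ) : HasDerivAt millsRatio (-1 + x * millsRatio x) x :=
  hasDerivAt_div_halfNormalPDF
    (((hasDerivAt_halfNormalCDF x).const_sub 1).congr_deriv (neg_one_mul _).symm)

lemma cdfRatio_nonneg {x : ℝ} (hx : 0 ≤ x) : 0 ≤ cdfRatio x :=
  div_nonneg (halfNormalCDF_nonneg hx) (halfNormalPDF_pos x).le

lemma millsRatio_nonneg (x : ℝ) : 0 ≤ millsRatio x :=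
  div_nonneg (sub_nonneg.2 (halfNormalCDF_le_one x)) (halfNormalPDF_pos x).le

lemma mul_millsRatio_le_one {x : ℝ} (hx : 0 ≤ x) : x * millsRatio x ≤ 1 := by
  rw [millsRatio, ← mul_div_assoc, div_le_one (halfNormalPDF_pos x), halfNormalCDF,
    halfNormalPDF]
  linarith [mul_one_sub_stdCDF_le_stdPhi hx]

lemma le_one_add_sq_mul_millsRatio {x : ℝ} (hx : 0 ≤ x) : x ≤ (1 + x ^ 2) * millsRatio x := by
  rw [millsRatio, ← mul_div_assoc, le_div_iff₀ (halfNormalPDF_pos x), halfNormalCDF,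
    halfNormalPDF]
  linarith [mul_stdPhi_le_one_add_sq_mul_one_sub_stdCDF hx]

lemma monotoneOn_mul_cdfRatio : MonotoneOn (fun x => x * cdfRatio x) (Ici 0) :=
  monotoneOn_Ici_of_hasDerivAt (fun x => (hasDerivAt_id x).mul (hasDerivAt_cdfRatio x))
    fun x hx => by
      have := cdfRatio_nonneg hx.le
      simp only [id, one_mul]
      positivity

lemma monotoneOn_mul_millsRatio : MonotoneOn (fun x => x * millsRatio x) (Ici 0) :=
  monotoneOn_Ici_of_hasDerivAt (fun x => (hasDerivAt_id x).mul (hasDerivAt_millsRatio x))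
    fun x hx => by
      simp only [id, one_mul]
      linarith [le_one_add_sq_mul_millsRatio hx.le]

lemma fz_of_le {z x : ℝ} (h : x ≤ z) : fz z x = (1 - halfNormalCDF z) * cdfRatio x := by
  rw [fz, min_eq_left h, cdfRatio, halfNormalCDF, halfNormalCDF, halfNormalPDF]
  ring

lemma fz_of_ge {z x : ℝ} (h : z ≤ x) : fz z x = halfNormalCDF z * millsRatio x := by
  rw [fz, min_eq_right h, millsRatio, halfNormalCDF, halfNormalCDF, halfNormalPDF]
  ring

lemma abs_le_one_of_hasDerivAt_fz {z x d : ℝ} (hz : 0 ≤ z) (hx : 0 ≤ x) (hxz : x ≠ z)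
    (hd : HasDerivAt (fz z) d x) : |d| ≤ 1 := by
  have hFz := halfNormalCDF_le_one z
  have hFz₀ := halfNormalCDF_nonneg hz
  rcases hxz.lt_or_gt with hlt | hgt
  · have hfz : HasDerivAt (fz z) ((1 - halfNormalCDF z) * (1 + x * cdfRatio x)) x :=
      ((hasDerivAt_cdfRatio x).const_mul _).congr_of_eventuallyEq
        ((eventually_lt_nhds hlt).mono fun y hy => fz_of_le (le_of_lt hy))
    have hux : 0 ≤ x * cdfRatio x := mul_nonneg hx (cdfRatio_nonneg hx)
    have hle : x * cdfRatio x ≤ z * cdfRatio z := monotoneOn_mul_cdfRatio hx hz hlt.le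
    -- the value at `z` of the increasing `x F x / p x` is tamed by Mills' bound at `z`
    have hswap : (1 - halfNormalCDF z) * (z * cdfRatio z)
        = halfNormalCDF z * (z * millsRatio z) := by
      rw [cdfRatio, millsRatio]; ring
    have := mul_le_mul_of_nonneg_left (mul_millsRatio_le_one hz) hFz₀
    rw [hd.unique hfz, abs_le]
    constructor <;> nlinarith
  · have hfz : HasDerivAt (fz z) (halfNormalCDF z * (-1 + x * millsRatio x)) x :=
      ((hasDerivAt_millsRatio x).const_mul _).congr_of_eventuallyEq
        ((eventually_gt_nhds hgt).mono fun y hy => fz_of_ge (le_of_lt hy))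
    have hvx := mul_nonneg hx (millsRatio_nonneg x)
    have := mul_millsRatio_le_one hx
    rw [hd.unique hfz, abs_le]
    constructor <;> nlinarith

lemma monotoneOn_mul_fz {z : ℝ} (hz : 0 ≤ z) : MonotoneOn (fun x => x * fz z x) (Ici 0) := by
  have hleft : MonotoneOn (fun x => x * fz z x) (Icc 0 z) := by
    refine MonotoneOn.congr (fun a ha b hb hab => ?_) fun x hx =>
      (by rw [fz_of_le hx.2]; ring : (1 - halfNormalCDF z) * (x * cdfRatio x) = x * fz z x)
    exact mul_le_mul_of_nonneg_left (monotoneOn_mul_cdfRatio ha.1 hb.1 hab)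
      (sub_nonneg.2 (halfNormalCDF_le_one z))
  have hright : MonotoneOn (fun x => x * fz z x) (Ici z) := by
    refine MonotoneOn.congr (fun a ha b hb hab => ?_) fun x hx =>
      (by rw [fz_of_ge hx]; ring : halfNormalCDF z * (x * millsRatio x) = x * fz z x)
    exact mul_le_mul_of_nonneg_left
      (monotoneOn_mul_millsRatio (hz.trans ha) (hz.trans hb) hab) (halfNormalCDF_nonneg hz)
  rw [← Icc_union_Ici_eq_Ici hz]
  exact hleft.union_right hright (isGreatest_Icc hz) isLeast_Ici

theorem stmt12 (z : ℝ) (hz : 0 ≤ z) :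
    (∀ x : ℝ, 0 ≤ x → x ≠ z → ∀ d : ℝ, HasDerivAt (fz z) d x → |d| ≤ 1) ∧
    MonotoneOn (fun x => x * fz z x) (Set.Ici 0) :=
  ⟨fun _ hx hxz _ hd => abs_le_one_of_hasDerivAt_fz hz hx hxz hd, monotoneOn_mul_fz hz⟩
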